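/- Let D be a finitely supported probability distribution on [−1,1] satisfying the 3-sample median constraint. Then there exist probability distributions D_1, D_2, D_3 on [−1,1], each supported on at most two points, each with mean equal to E[D], such that for independent samples a_1 ~ D_1, a_2 ~ D_2, a_3 ~ D_3, one has Pr[a_1 + a_2 + a_3 ≤ 0] ≥ 1/2. -/

import Mathlib

/-
Fix every coordinate but the `i`-th. The probability that the sum is `≤ 0` is `∫ G dνᵢ`, where
`G x` is that probability given that the `i`-th sample equals `x`; `G` does not involve `νᵢ`.
Among distributions on the finite support of `μ` with mean `m`, the linear functional
`ρ ↦ ∫ G dρ` is maximised by a two-point one (Feige's lemma): peel off from `μ` the largest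
multiple of the two-point distribution on `min, max` of the support with mean `m`; the
renormalised remainder has mean `m` and a smaller support, so induction applies. Replacing the
distributions of the samples one at a time thus never decreases the probability.
-/

open MeasureTheory

/-- A probability distribution `μ` on `[-1,1]` satisfies the `k`-sample median constraint if
for `k` i.i.d. samples `Y_1, …, Y_k ~ μ`, `Pr[Y_1 + ⋯ + Y_k ≤ 0] ≥ 1/2`. -/
def MedianConstraint (k : ℕ) (μ : Measure ℝ) : Prop :=
  (1 : ENNReal) / 2 ≤ Measure.pi (fun _ : Fin k => μ) {y | ∑ i, y i ≤ 0}

open Finset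
open scoped ENNReal

def TwoPointDominated (g : ℝ → ℝ) (s : Finset ℝ) (m c : ℝ) : Prop :=
  ∃ a ∈ s, ∃ b ∈ s, ∃ q ∈ Set.Icc (0 : ℝ) 1,
    (1 - q) * a + q * b = m ∧ c ≤ (1 - q) * g a + q * g b

namespace TwoPointDominated

variable {g : ℝ → ℝ} {s s' : Finset ℝ} {m c c₁ c₂ : ℝ}

lemma mono (h : TwoPointDominated g s m c) (hs : s ⊆ s') {c' : ℝ} (hc : c' ≤ c) :
    TwoPointDominated g s' m c' := by
  obtain ⟨a, ha, b, hb, q, hq, hm, hc'⟩ := h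
  exact ⟨a, hs ha, b, hs hb, q, hq, hm, hc.trans hc'⟩

lemma convex_comb (h₁ : TwoPointDominated g s m c₁) (h₂ : TwoPointDominated g s m c₂)
    {t : ℝ} (ht₀ : 0 ≤ t) (ht₁ : t ≤ 1) :
    TwoPointDominated g s m ((1 - t) * c₁ + t * c₂) := by
  rcases le_total c₁ c₂ with h | h
  · exact h₂.mono subset_rfl (by nlinarith)
  · exact h₁.mono subset_rfl (by nlinarith)

end TwoPointDominated

section Weights

variable {s : Finset ℝ} {p : ℝ → ℝ}

lemma sum_mul_sub_eq (h1 : ∑ x ∈ s, p x = 1) (c : ℝ) :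
    ∑ x ∈ s, p x * (x - c) = ∑ x ∈ s, p x * x - c := by
  simp only [mul_sub, sum_sub_distrib, ← sum_mul, h1, one_mul]

lemma lt_sum_mul_of_forall_le {u v : ℝ} (hp : ∀ x ∈ s, 0 ≤ p x) (h1 : ∑ x ∈ s, p x = 1)
    (hu : ∀ x ∈ s, u ≤ x) (hv : v ∈ s) (hpv : 0 < p v) (huv : u < v) :
    u < ∑ x ∈ s, p x * x := by
  have h := single_le_sum (f := fun x ↦ p x * (x - u))
    (fun x hx ↦ mul_nonneg (hp x hx) (sub_nonneg.2 (hu x hx))) hv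
  rw [sum_mul_sub_eq h1] at h
  nlinarith [mul_pos hpv (sub_pos.2 huv)]

lemma sum_mul_lt_of_forall_le {u v : ℝ} (hp : ∀ x ∈ s, 0 ≤ p x) (h1 : ∑ x ∈ s, p x = 1)
    (hv : ∀ x ∈ s, x ≤ v) (hu : u ∈ s) (hpu : 0 < p u) (huv : u < v) :
    ∑ x ∈ s, p x * x < v := by
  have h := single_le_sum (f := fun x ↦ p x * (v - x))
    (fun x hx ↦ mul_nonneg (hp x hx) (sub_nonneg.2 (hv x hx))) hu
  rw [← neg_le_neg_iff, ← sum_neg_distrib] at h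
  simp only [← mul_neg, neg_sub, sum_mul_sub_eq h1] at h
  nlinarith [mul_pos hpu (sub_pos.2 huv)]

lemma twoPointDominated_of_card_le_two (g : ℝ → ℝ) (hp : ∀ x ∈ s, 0 ≤ p x)
    (h1 : ∑ x ∈ s, p x = 1) (hs : s.card ≤ 2) :
    TwoPointDominated g s (∑ x ∈ s, p x * x) (∑ x ∈ s, p x * g x) := by
  obtain h | h | h : s.card = 0 ∨ s.card = 1 ∨ s.card = 2 := by omega
  · simp [card_eq_zero.1 h] at h1
  · obtain ⟨a, rfl⟩ := card_eq_one.1 h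
    rw [sum_singleton] at h1
    exact ⟨a, mem_singleton_self a, a, mem_singleton_self a, 0, ⟨le_rfl, zero_le_one⟩,
      by simp [h1], by simp [h1]⟩
  · obtain ⟨a, b, hab, rfl⟩ := card_eq_two.1 h
    have ha : a ∈ ({a, b} : Finset ℝ) := mem_insert_self a {b}
    have hb : b ∈ ({a, b} : Finset ℝ) := mem_insert_of_mem (mem_singleton_self b)
    simp only [sum_pair hab] at h1 ⊢
    have hpa : 1 - p b = p a := by linarith
    exact ⟨a, ha, b, hb, p b, ⟨hp b hb, by linarith [hp a ha]⟩, by rw [hpa], by rw [hpa]⟩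

lemma exists_pair_mean_eq (hp : ∀ x ∈ s, 0 < p x) (h1 : ∑ x ∈ s, p x = 1) (hs : 3 ≤ s.card) :
    ∃ u ∈ s, ∃ v ∈ s, u ≠ v ∧ p u + p v < 1 ∧
      ∃ β ∈ Set.Ioo (0 : ℝ) 1, (1 - β) * u + β * v = ∑ x ∈ s, p x * x := by
  have hne : s.Nonempty := card_pos.1 (by omega)
  set u := s.min' hne
  set v := s.max' hne
  have hu : u ∈ s := min'_mem s hne
  have hv : v ∈ s := max'_mem s hne
  have huv : u < v := min'_lt_max'_of_card s (by omega)
  have hp0 : ∀ x ∈ s, 0 ≤ p x := fun x hx ↦ (hp x hx).le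
  have hum := lt_sum_mul_of_forall_le hp0 h1 (fun x hx ↦ min'_le s x hx) hv (hp v hv) huv
  have hmv := sum_mul_lt_of_forall_le hp0 h1 (fun x hx ↦ le_max' s x hx) hu (hp u hu) huv
  have hmass : p u + p v < 1 := by
    have hrest : 0 < ∑ x ∈ (s.erase v).erase u, p x :=
      sum_pos (fun x hx ↦ hp x (mem_of_mem_erase (mem_of_mem_erase hx)))
        (card_pos.1 (by rw [card_erase_of_mem (mem_erase.2 ⟨huv.ne, hu⟩),
          card_erase_of_mem hv]; omega))
    rw [← add_sum_erase s p hv, ← add_sum_erase (s.erase v) p (mem_erase.2 ⟨huv.ne, hu⟩)] at h1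
    linarith
  refine ⟨u, hu, v, hv, huv.ne, hmass, (∑ x ∈ s, p x * x - u) / (v - u),
    ⟨div_pos (by linarith) (by linarith), (div_lt_one (by linarith)).2 (by linarith)⟩, ?_⟩
  field_simp [(sub_pos.2 huv).ne']
  ring

lemma exists_twoPoint_peel {u v β : ℝ} (hp : ∀ x ∈ s, 0 ≤ p x) (hu : u ∈ s) (hv : v ∈ s)
    (huv : u ≠ v) (hmass : p u + p v < 1) (hβ : β ∈ Set.Ioo (0 : ℝ) 1) :
    ∃ t ∈ Set.Ico (0 : ℝ) 1, ∃ r ∈ s, ∃ p' : ℝ → ℝ, (∀ x ∈ s, 0 ≤ p' x) ∧ p' r = 0 ∧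
      ∀ f : ℝ → ℝ, ∑ x ∈ s, p x * f x =
        t * ((1 - β) * f u + β * f v) + (1 - t) * ∑ x ∈ s, p' x * f x := by
  have hβ0 : 0 < β := hβ.1
  have hβ1 : 0 < 1 - β := sub_pos.2 hβ.2
  -- `t` is the largest multiple of `(1 - β) δ_u + β δ_v` that fits below `p`
  set t := min (p u / (1 - β)) (p v / β)
  have htu : t * (1 - β) ≤ p u := (le_div_iff₀ hβ1).1 (min_le_left _ _)
  have htv : t * β ≤ p v := (le_div_iff₀ hβ0).1 (min_le_right _ _)
  have ht0 : 0 ≤ t := le_min (div_nonneg (hp u hu) hβ1.le) (div_nonneg (hp v hv) hβ0.le)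
  have ht1 : t < 1 := by nlinarith
  set κ : ℝ → ℝ := fun x ↦ (if x = u then 1 - β else 0) + (if x = v then β else 0)
  have hκu : κ u = 1 - β := by simp [κ, huv]
  have hκv : κ v = β := by simp [κ, huv.symm]
  have hκ : ∀ f : ℝ → ℝ, ∑ x ∈ s, κ x * f x = (1 - β) * f u + β * f v := by
    intro f
    simp only [κ, add_mul, ite_mul, zero_mul, sum_add_distrib, sum_ite_eq', if_pos hu, if_pos hv]
  obtain ⟨r, hr, hpr⟩ : ∃ r ∈ s, p r = t * κ r := by
    rcases min_choice (p u / (1 - β)) (p v / β) with h | h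
    · exact ⟨u, hu, by rw [hκu, show t = _ from h, div_mul_cancel₀ _ hβ1.ne']⟩
    · exact ⟨v, hv, by rw [hκv, show t = _ from h, div_mul_cancel₀ _ hβ0.ne']⟩
  refine ⟨t, ⟨ht0, ht1⟩, r, hr, fun x ↦ (p x - t * κ x) / (1 - t), fun x hx ↦ ?_,
    by simp [hpr], fun f ↦ ?_⟩
  · refine div_nonneg (sub_nonneg.2 ?_) (by linarith)
    by_cases hxu : x = u
    · rw [hxu, hκu]; linarith
    by_cases hxv : x = v
    · rw [hxv, hκv]; linarith
    simp [κ, hxu, hxv, hp x hx]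
  · calc ∑ x ∈ s, p x * f x
        = ∑ x ∈ s, (t * (κ x * f x) + (1 - t) * ((p x - t * κ x) / (1 - t) * f x)) :=
          sum_congr rfl fun x _ ↦ by field_simp [(sub_pos.2 ht1).ne']; ring
      _ = _ := by rw [sum_add_distrib, ← mul_sum, ← mul_sum, hκ]

theorem twoPointDominated_of_weights (g : ℝ → ℝ) (hp : ∀ x ∈ s, 0 ≤ p x)
    (h1 : ∑ x ∈ s, p x = 1) :
    TwoPointDominated g s (∑ x ∈ s, p x * x) (∑ x ∈ s, p x * g x) := by
  induction s using Finset.strongInduction generalizing p with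
  | H s ih =>
  by_cases hzero : ∃ r ∈ s, p r = 0
  · obtain ⟨r, hr, hpr⟩ := hzero
    have h := ih (s.erase r) (erase_ssubset hr) (fun x hx ↦ hp x (mem_of_mem_erase hx))
      (by rwa [sum_erase _ hpr])
    rw [sum_erase _ (by simp [hpr]), sum_erase _ (by simp [hpr])] at h
    exact h.mono (erase_subset r s) le_rfl
  push Not at hzero
  rcases le_or_gt s.card 2 with hs | hs
  · exact twoPointDominated_of_card_le_two g hp h1 hs
  obtain ⟨u, hu, v, hv, huv, hmass, β, hβ, hmean⟩ :=
    exists_pair_mean_eq (fun x hx ↦ (hp x hx).lt_of_ne' (hzero x hx)) h1 hs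
  obtain ⟨t, ht, r, hr, p', hp', hr0, hsplit⟩ := exists_twoPoint_peel hp hu hv huv hmass hβ
  have hmass' : ∑ x ∈ s, p' x = 1 := by
    have h := hsplit 1
    simp only [Pi.one_apply, mul_one, h1] at h
    nlinarith [ht.2]
  have hmean' : ∑ x ∈ s, p' x * x = ∑ x ∈ s, p x * x := by
    have h := hsplit id
    simp only [id, hmean] at h
    nlinarith [ht.2]
  have hrest := ih (s.erase r) (erase_ssubset hr) (fun x hx ↦ hp' x (mem_of_mem_erase hx))
    (by rwa [sum_erase _ hr0])
  rw [sum_erase _ (by simp [hr0]), sum_erase _ (by simp [hr0]), hmean'] at hrest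
  have htwo : TwoPointDominated g s (∑ x ∈ s, p x * x) ((1 - β) * g u + β * g v) :=
    ⟨u, hu, v, hv, β, ⟨hβ.1.le, hβ.2.le⟩, hmean, le_rfl⟩
  rw [hsplit g, add_comm]
  exact (hrest.mono (erase_subset r s) le_rfl).convex_comb htwo ht.1 ht.2.le

end Weights

noncomputable def twoPoint (a b q : ℝ) : Measure ℝ :=
  ENNReal.ofReal (1 - q) • Measure.dirac a + ENNReal.ofReal q • Measure.dirac b

section TwoPoint

variable {a b q : ℝ}

lemma isProbabilityMeasure_twoPoint (hq : q ∈ Set.Icc (0 : ℝ) 1) :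
    IsProbabilityMeasure (twoPoint a b q) := by
  constructor
  simp [twoPoint, ← ENNReal.ofReal_add (sub_nonneg.2 hq.2) hq.1]

lemma twoPoint_compl_pair : twoPoint a b q ({a, b} : Set ℝ)ᶜ = 0 := by
  simp [twoPoint]

lemma integral_id_twoPoint (hq : q ∈ Set.Icc (0 : ℝ) 1) :
    ∫ x, x ∂twoPoint a b q = (1 - q) * a + q * b := by
  rw [twoPoint, integral_add_measure, integral_smul_measure, integral_smul_measure,
    integral_dirac, integral_dirac, ENNReal.toReal_ofReal (sub_nonneg.2 hq.2),
    ENNReal.toReal_ofReal hq.1, smul_eq_mul, smul_eq_mul]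
  all_goals exact (integrable_dirac enorm_lt_top).smul_measure ENNReal.ofReal_ne_top

lemma lintegral_twoPoint (g : ℝ → ℝ≥0∞) :
    ∫⁻ x, g x ∂twoPoint a b q = ENNReal.ofReal (1 - q) * g a + ENNReal.ofReal q * g b := by
  simp [twoPoint, lintegral_add_measure, lintegral_smul_measure]

end TwoPoint

theorem exists_twoPoint_lintegral_ge (μ : Measure ℝ) [IsProbabilityMeasure μ] {s : Finset ℝ}
    (hs : μ (s : Set ℝ)ᶜ = 0) {g : ℝ → ℝ≥0∞} (hg : ∀ x, g x ≠ ∞) :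
    ∃ a ∈ s, ∃ b ∈ s, ∃ q ∈ Set.Icc (0 : ℝ) 1, ∫ x, x ∂twoPoint a b q = ∫ x, x ∂μ ∧
      ∫⁻ x, g x ∂μ ≤ ∫⁻ x, g x ∂twoPoint a b q := by
  have hμ : μ.restrict s = μ := Measure.restrict_eq_self_of_ae_mem (mem_ae_iff.2 hs)
  have hmass : ∑ x ∈ s, μ.real {x} = 1 := by
    rw [sum_measureReal_singleton, measureReal_def,
      (prob_compl_eq_zero_iff s.measurableSet).1 hs, ENNReal.toReal_one]
  have hmean : ∫ x, x ∂μ = ∑ x ∈ s, μ.real {x} * x := by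
    calc ∫ x, x ∂μ = ∫ x in s, x ∂μ := by rw [hμ]
      _ = _ := setIntegral_finset s IntegrableOn.finset
  have hlint : ∫⁻ x, g x ∂μ = ENNReal.ofReal (∑ x ∈ s, μ.real {x} * (g x).toReal) := by
    calc ∫⁻ x, g x ∂μ = ∫⁻ x in s, g x ∂μ := by rw [hμ]
      _ = _ := ?_
    rw [lintegral_finset, ENNReal.ofReal_sum_of_nonneg fun x _ ↦ by positivity]
    refine sum_congr rfl fun x _ ↦ ?_
    rw [ENNReal.ofReal_mul measureReal_nonneg, ENNReal.ofReal_toReal (hg x), measureReal_def,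
      ENNReal.ofReal_toReal (measure_ne_top μ _), mul_comm]
  obtain ⟨a, ha, b, hb, q, hq, hab, hle⟩ :=
    twoPointDominated_of_weights (fun x ↦ (g x).toReal) (fun x _ ↦ measureReal_nonneg) hmass
  refine ⟨a, ha, b, hb, q, hq, by rw [integral_id_twoPoint hq, hab, hmean], ?_⟩
  rw [hlint, lintegral_twoPoint, ← ENNReal.ofReal_toReal (hg a), ← ENNReal.ofReal_toReal (hg b),
    ← ENNReal.ofReal_mul (sub_nonneg.2 hq.2), ← ENNReal.ofReal_mul hq.1,
    ← ENNReal.ofReal_add (mul_nonneg (sub_nonneg.2 hq.2) ENNReal.toReal_nonneg)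
      (mul_nonneg hq.1 ENNReal.toReal_nonneg)]
  exact ENNReal.ofReal_le_ofReal hle

section Product

variable {ι : Type*} [DecidableEq ι]

lemma lmarginal_update_measure_of_notMem {X : ι → Type*} [∀ i, MeasurableSpace (X i)]
    {s : Finset ι} {i : ι} (hi : i ∉ s) (ν : ∀ i, Measure (X i)) (ρ : Measure (X i))
    (f : (∀ i, X i) → ℝ≥0∞) :
    ∫⋯∫⁻_s, f ∂(Function.update ν i ρ) = ∫⋯∫⁻_s, f ∂ν := by
  ext x
  simp only [lmarginal]
  congr
  funext j
  exact Function.update_of_ne (ne_of_mem_of_not_mem j.2 hi) _ _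

variable [Fintype ι]

lemma measure_pi_eq_lintegral_lmarginal {X : ι → Type*} [∀ i, MeasurableSpace (X i)]
    (ν : ∀ i, Measure (X i)) [∀ i, SigmaFinite (ν i)] {A : Set (∀ i, X i)}
    (hA : MeasurableSet A) (i : ι) (x : ∀ i, X i) :
    Measure.pi ν A =
      ∫⁻ xi, (∫⋯∫⁻_(univ.erase i), A.indicator 1 ∂ν) (Function.update x i xi) ∂ν i := by
  rw [← lintegral_indicator_one hA, lintegral_eq_lmarginal_univ x,
    lmarginal_erase _ (measurable_one.indicator hA) (mem_univ i)]

theorem exists_twoPoint_measure_pi_update_ge (ν : ι → Measure ℝ)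
    [∀ i, IsProbabilityMeasure (ν i)] (i : ι) {s : Finset ℝ} (hs : ν i (s : Set ℝ)ᶜ = 0)
    {A : Set (ι → ℝ)} (hA : MeasurableSet A) :
    ∃ a ∈ s, ∃ b ∈ s, ∃ q ∈ Set.Icc (0 : ℝ) 1, ∫ x, x ∂twoPoint a b q = ∫ x, x ∂ν i ∧
      Measure.pi ν A ≤ Measure.pi (Function.update ν i (twoPoint a b q)) A := by
  set G := fun xi ↦ (∫⋯∫⁻_(univ.erase i), A.indicator 1 ∂ν) (Function.update 0 i xi)
  have hG : ∀ xi, G xi ≠ ∞ := by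
    refine fun xi ↦ ne_top_of_le_ne_top ENNReal.one_ne_top ?_
    calc G xi ≤ (∫⋯∫⁻_(univ.erase i), 1 ∂ν) (Function.update 0 i xi) :=
          lmarginal_mono (Set.indicator_le_self A 1) _
      _ = 1 := by simp [lmarginal]
  obtain ⟨a, ha, b, hb, q, hq, hmean, hle⟩ := exists_twoPoint_lintegral_ge (ν i) hs hG
  have : ∀ j, IsProbabilityMeasure (Function.update ν i (twoPoint a b q) j) := by
    intro j
    rcases eq_or_ne j i with rfl | hj
    · simpa using isProbabilityMeasure_twoPoint hq
    · rw [Function.update_of_ne hj]; infer_instance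
  refine ⟨a, ha, b, hb, q, hq, hmean, ?_⟩
  rwa [measure_pi_eq_lintegral_lmarginal ν hA i 0, measure_pi_eq_lintegral_lmarginal _ hA i 0,
    lmarginal_update_measure_of_notMem (notMem_erase i univ), Function.update_self]

end Product

theorem exists_twoPoint_measure_pi_ge {ι : Type*} [Fintype ι] (μ : Measure ℝ)
    [IsProbabilityMeasure μ] {s : Finset ℝ} (hs : μ (s : Set ℝ)ᶜ = 0) {A : Set (ι → ℝ)}
    (hA : MeasurableSet A) :
    ∃ ν : ι → Measure ℝ, (∀ i, ∃ a ∈ s, ∃ b ∈ s, ∃ q ∈ Set.Icc (0 : ℝ) 1,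
      ν i = twoPoint a b q ∧ ∫ x, x ∂ν i = ∫ x, x ∂μ) ∧
      Measure.pi (fun _ ↦ μ) A ≤ Measure.pi ν A := by
  classical
  suffices h : ∀ T : Finset ι, ∃ ν : ι → Measure ℝ, (∀ i, IsProbabilityMeasure (ν i)) ∧
      (∀ i ∉ T, ν i = μ) ∧ (∀ i ∈ T, ∃ a ∈ s, ∃ b ∈ s, ∃ q ∈ Set.Icc (0 : ℝ) 1,
        ν i = twoPoint a b q ∧ ∫ x, x ∂ν i = ∫ x, x ∂μ) ∧
      Measure.pi (fun _ ↦ μ) A ≤ Measure.pi ν A by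
    obtain ⟨ν, -, -, htwo, hle⟩ := h univ
    exact ⟨ν, fun i ↦ htwo i (mem_univ i), hle⟩
  intro T
  induction T using Finset.induction_on with
  | empty => exact ⟨fun _ ↦ μ, fun _ ↦ inferInstance, fun _ _ ↦ rfl, by simp, le_rfl⟩
  | insert j T hj ih =>
    obtain ⟨ν, hprob, hμ, htwo, hle⟩ := ih
    obtain ⟨a, ha, b, hb, q, hq, hmean, hle'⟩ :=
      exists_twoPoint_measure_pi_update_ge ν j (s := s) (by rwa [hμ j hj]) hA
    refine ⟨Function.update ν j (twoPoint a b q), fun i ↦ ?_, fun i hi ↦ ?_, fun i hi ↦ ?_,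
      hle.trans hle'⟩
    · rcases eq_or_ne i j with rfl | hij
      · simpa using isProbabilityMeasure_twoPoint hq
      · rw [Function.update_of_ne hij]; exact hprob i
    · obtain ⟨hij, hiT⟩ : i ≠ j ∧ i ∉ T := by simpa using hi
      rw [Function.update_of_ne hij, hμ i hiT]
    · rcases eq_or_ne i j with rfl | hij
      · rw [Function.update_self, hmean, hμ i hj]
        exact ⟨a, ha, b, hb, q, hq, rfl, rfl⟩
      · rw [Function.update_of_ne hij]
        exact htwo i ((mem_insert.1 hi).resolve_left hij)

/-- For every finitely supported probability distribution `μ` on `[-1,1]`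
satisfying the 3-sample median constraint, there exist independent two-point distributions
`ν 0, ν 1, ν 2` on `[-1,1]`, each with the same mean as `μ`, such that
`Pr[a₁ + a₂ + a₃ ≤ 0] ≥ 1/2` for independent samples `aᵢ ~ ν i`. -/
theorem stmt11 (μ : Measure ℝ) [IsProbabilityMeasure μ]
    (hsupp : μ (Set.Icc (-1 : ℝ) 1)ᶜ = 0)
    (hfin : ∃ s : Finset ℝ, μ ((s : Set ℝ))ᶜ = 0)
    (hmed : MedianConstraint 3 μ) :
    ∃ ν : Fin 3 → Measure ℝ,
      (∀ i, IsProbabilityMeasure (ν i)) ∧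
      (∀ i, ν i (Set.Icc (-1 : ℝ) 1)ᶜ = 0) ∧
      (∀ i, ∃ a b : ℝ, ν i ({a, b} : Set ℝ)ᶜ = 0) ∧
      (∀ i, ∫ x, x ∂(ν i) = ∫ x, x ∂μ) ∧
      (1 : ENNReal) / 2 ≤ Measure.pi ν {y | ∑ i, y i ≤ 0} := by
  obtain ⟨s, hs⟩ := hfin
  have hs' : μ (s.filter (· ∈ Set.Icc (-1 : ℝ) 1) : Set ℝ)ᶜ = 0 :=
    measure_mono_null (fun x hx ↦ by simpa [or_iff_not_imp_left] using hx)
      (measure_union_null hs hsupp)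
  have hA : MeasurableSet {y : Fin 3 → ℝ | ∑ i, y i ≤ 0} :=
    measurableSet_le (by fun_prop) measurable_const
  obtain ⟨ν, htwo, hle⟩ := exists_twoPoint_measure_pi_ge μ hs' hA
  choose a ha b hb q hq hν hmean using htwo
  refine ⟨ν, fun i ↦ hν i ▸ isProbabilityMeasure_twoPoint (hq i), fun i ↦ ?_,
    fun i ↦ ⟨a i, b i, hν i ▸ twoPoint_compl_pair⟩, hmean, hmed.trans hle⟩
  have hab : ({a i, b i} : Set ℝ) ⊆ Set.Icc (-1) 1 :=
    Set.pair_subset (mem_filter.1 (ha i)).2 (mem_filter.1 (hb i)).2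
  exact measure_mono_null (Set.compl_subset_compl.2 hab) (hν i ▸ twoPoint_compl_pair)
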